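/- Let G ∈ ℝ^{m×N}, μ > 0, c > 0, and let h ∈ ℝ^m. For λ ≥ 0 define the soft-thresholding operator S_λ: ℝ^N → ℝ^N componentwise by (S_λ(v))_i = sgn(v_i)·max(0, |v_i| − λ). Suppose ‖Gᵀh‖_∞ ≤ 2μ. Define the iterative shrinkage sequence U₀ = 0 and U_{j+1} = S_{2μ/c}((1/c)·Gᵀ(h − G U_j) + U_j) for j ∈ ℕ. Then U_j = 0 for all j ∈ ℕ. -/
import Mathlib


open Matrix

/-- The soft-thresholding operator `(S_t(v))_i = sgn(v_i)·max(0, |v_i| − t)`. -/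
noncomputable def softThresh {N : ℕ} (t : ℝ) (v : Fin N → ℝ) : Fin N → ℝ :=
  fun i => Real.sign (v i) * max 0 (|v i| - t)

/-- The iterative shrinkage/thresholding sequence `U₀ = 0`,
`U_{j+1} = S_{2μ/c}((1/c)Gᵀ(h − GU_j) + U_j)`. -/
noncomputable def istSeq {m N : ℕ} (G : Matrix (Fin m) (Fin N) ℝ) (h : Fin m → ℝ)
    (μ c : ℝ) : ℕ → Fin N → ℝ
  | 0 => 0
  | j + 1 =>
      softThresh (2 * μ / c)
        ((1 / c) • Gᵀ.mulVec (h - G.mulVec (istSeq G h μ c j)) + istSeq G h μ c j)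

/-- **The IST iteration stays at zero on `Ω`.** If `‖Gᵀh‖_∞ ≤ 2μ`, then the iterative
shrinkage sequence started at `U₀ = 0` satisfies `U_j = 0` for all `j`. -/
theorem istSeq_eq_zero {m N : ℕ}
    (G : Matrix (Fin m) (Fin N) ℝ) (h : Fin m → ℝ)
    (μ c : ℝ) (hμ : 0 < μ) (hc : 0 < c)
    (hb : ∀ i : Fin N, |(Gᵀ.mulVec h) i| ≤ 2 * μ) :
    ∀ j : ℕ, istSeq G h μ c j = 0 := by
  intro j
  induction j with
  | zero => rfl
  | succ j ih =>
    show softThresh _ _ = 0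
    rw [ih]
    funext i
    simp only [softThresh, Matrix.mulVec_zero, sub_zero, add_zero, Pi.smul_apply,
      smul_eq_mul, one_div]
    have hle : |c⁻¹ * Gᵀ.mulVec h i| ≤ 2 * μ / c := by
      rw [abs_mul, abs_of_pos (inv_pos.mpr hc)]
      calc c⁻¹ * |Gᵀ.mulVec h i| ≤ c⁻¹ * (2 * μ) := by
            exact mul_le_mul_of_nonneg_left (hb i) (le_of_lt (inv_pos.mpr hc))
        _ = 2 * μ / c := by ring
    have : max 0 (|c⁻¹ * Gᵀ.mulVec h i| - 2 * μ / c) = 0 :=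
      max_eq_left (by linarith)
    rw [this, mul_zero]
    rfl
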